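/- Under the run invariant, if z = 0, c_j = c_i and l_j ≤ l_i, then c_k^{l_k} ⋯ c_{j-1}^{l_{j-1}} c_j^{l_j} ∈ P', and the longest border of this word has run-length encoding of length ℓ + 1 (so the invariant holds for j+1 with ℓ' = ℓ + 1). -/

import Mathlib

variable {α : Type*}

/-- The rotation `rot(w,i) = w[i..|w|-1] w[0..i-1]`. -/
def rot (w : List α) (i : ℕ) : List α := w.drop i ++ w.take i

/-- A Lyndon word: a nonempty word strictly smaller than all of its proper rotations. -/
def IsLyndon [LinearOrder α] (w : List α) : Prop :=
  w ≠ [] ∧ ∀ i, 0 < i → i < w.length → w < rot w i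

/-- `IsCFL w f` : `f` is the Chen–Fox–Lyndon factorization of `w`, i.e. a
nonincreasing sequence of Lyndon words whose concatenation is `w`. -/
def IsCFL [LinearOrder α] (w : List α) (f : List (List α)) : Prop :=
  f.flatten = w ∧ (∀ x ∈ f, IsLyndon x) ∧ f.Chain' (· ≥ ·)

/-- `u^k` : the `k`-fold concatenation of the word `u`. -/
def listPow (u : List α) (k : ℕ) : List α := (List.replicate k u).flatten

/-- `P`: the set of nonempty prefixes of Lyndon words. -/
def InP [LinearOrder α] (w : List α) : Prop :=
  w ≠ [] ∧ ∃ u : List α, IsLyndon (w ++ u)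

/-- `P' = P ∪ { c^k : k ≥ 2 }` where `c` is the maximum symbol of the alphabet. -/
def InP' [LinearOrder α] (w : List α) : Prop :=
  InP w ∨ ∃ (c : α) (k : ℕ), 2 ≤ k ∧ (∀ a : α, a ≤ c) ∧ w = List.replicate k c

/-- A border of `w`: a proper prefix of `w` that is also a suffix of `w`. -/
def IsBorder (b w : List α) : Prop := b <+: w ∧ b <:+ w ∧ b.length < w.length

/-- The length of the longest common prefix of two words. -/
def lcpLen [DecidableEq α] : List α → List α → ℕ
  | a :: u, b :: v => if a = b then lcpLen u v + 1 else 0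
  | _, _ => 0


/-- The number of runs in the run-length encoding of a word: the length of the
list obtained by collapsing consecutive equal symbols. -/
def numRuns [DecidableEq α] (w : List α) : ℕ := (w.destutter (· ≠ ·)).length

/-- An LR word: either a Lyndon word or a power `a^k` (`k ≥ 2`) of a single symbol. -/
def IsLR [LinearOrder α] (w : List α) : Prop :=
  IsLyndon w ∨ ∃ (a : α) (k : ℕ), 2 ≤ k ∧ w = List.replicate k a

/-- The word `c_k^{l_k} c_{k+1}^{l_{k+1}} ⋯ c_{j-1}^{l_{j-1}}` determined by the
runs `(c_t, l_t)` for `k ≤ t < j`. -/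
def runWord (c : ℕ → α) (l : ℕ → ℕ) (k j : ℕ) : List α :=
  ((List.range (j - k)).map (fun t => List.replicate (l (k + t)) (c (k + t)))).flatten


/-!
Write `W = c_k^{l_k} ⋯ c_{j-1}^{l_{j-1}}`, `b` for its longest border and `x = c_j^{l_j}`.

The condition `z = 0` forces `b` to end at a run boundary, `b = c_k^{l_k} ⋯ c_{i-1}^{l_{i-1}}`:
a border ending with `c_e^m`, `0 < m < l_e ≤ l_{j-1}`, is a suffix of `W` ending in fewer than
`l_{j-1}` copies of the last letter, so it is a single run `c_k^m`, and `c_k^{m+1}` is a longer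
border. As `c_j = c_i` and `l_j ≤ l_i`, the word `b x` is then a prefix of `W`.
Appending `x` increases the length of the longest border by at most `|x|`, so `b x` is a longest
border of `W x`, and it has one run more than `b`.

For membership in `P'`: no proper suffix of `W ∈ P'` is smaller than the prefix of `W` of the same
length. Together with the minimality of the period `p = |W| - |b|` this makes the prefix `q` of `W`
of length `p` a Lyndon word. The word `W x` still has period `p`, so it is a prefix of `q^n d`,
which is Lyndon for every letter `d > q_0`; if there is no such letter, `W x` is a power of the
maximal letter.
-/

open List

namespace List

theorem getLast_eq_of_replicate_suffix_append_replicate {x : List α} {a b : α} {m : ℕ}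
    (hm : 0 < m) (h : replicate (m + 1) a <:+ x ++ replicate m b) (hx : x ≠ []) :
    x.getLast hx = b := by
  have hlast : x.getLast hx :: replicate m b <:+ x ++ replicate m b :=
    ⟨x.dropLast, by rw [← singleton_append, ← append_assoc, dropLast_append_getLast]⟩
  have := (suffix_of_suffix_length_le h hlast (by simp)).eq_of_length (by simp)
  rw [replicate_succ, cons.injEq, replicate_inj] at this
  obtain ⟨rfl, -, _ | rfl⟩ := this
  · omega
  · rfl

section Lex

variable [LinearOrder α]

theorem append_lt_append_of_lt_of_not_prefix {x y : List α} (h : x < y) (hxy : ¬ x <+: y)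
    (u v : List α) : x ++ u < y ++ v := by
  induction h with
  | nil => exact absurd nil_prefix hxy
  | rel hab => exact Lex.rel hab
  | cons _ ih => exact Lex.cons (ih fun hp => hxy ((prefix_cons_inj _).2 hp))

theorem append_lt_append_of_lt_of_length_le {x y : List α} (h : x < y)
    (hlen : y.length ≤ x.length) (u v : List α) : x ++ u < y ++ v :=
  append_lt_append_of_lt_of_not_prefix h
    (fun hp => h.ne (hp.eq_of_length (le_antisymm hp.length_le hlen))) u v

theorem lt_of_append_lt_append_left {s t u : List α} (h : s ++ t < s ++ u) : t < u := by
  by_contra hn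
  exact append_left_le (l₁ := s) hn h

theorem le_of_cons_lt_cons {a b : α} {x y : List α} (h : a :: x < b :: y) : a ≤ b := by
  rcases cons_lt_cons_iff.1 h with hab | ⟨rfl, _⟩
  exacts [hab.le, le_rfl]

end Lex

end List

def IsLongestBorder (b w : List α) : Prop :=
  IsBorder b w ∧ ∀ b', IsBorder b' w → b'.length ≤ b.length

theorem IsLongestBorder.append {b w z : List α} (hb : IsLongestBorder b w)
    (hpre : b ++ z <+: w ++ z) : IsLongestBorder (b ++ z) (w ++ z) := by
  refine ⟨⟨hpre, suffix_append_self_iff.2 hb.1.2.1, by simpa using hb.1.2.2⟩,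
    fun b' hb' => ?_⟩
  rcases le_or_gt b'.length z.length with hz | hz
  · simp only [length_append]
    omega
  obtain ⟨u, rfl⟩ := suffix_of_suffix_length_le (suffix_append w z) hb'.2.1 hz.le
  have hu : IsBorder u w := by
    refine ⟨prefix_of_prefix_length_le ((prefix_append u z).trans hb'.1) (prefix_append w z) ?_,
      suffix_append_self_iff.1 hb'.2.1, ?_⟩ <;>
    have := hb'.2.2 <;> simp only [length_append] at this <;> omega
  simpa using hb.2 u hu

theorem listPow_succ (q : List α) (n : ℕ) : listPow q (n + 1) = q ++ listPow q n := by
  simp [listPow, replicate_succ]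

theorem listPow_succ' (q : List α) (n : ℕ) : listPow q (n + 1) = listPow q n ++ q := by
  simp [listPow, replicate_succ']

theorem length_listPow (q : List α) (n : ℕ) : (listPow q n).length = n * q.length := by
  simp [listPow]

theorem prefix_listPow_of_prefix_append {w q : List α} (hq : q ≠ []) (h : w <+: q ++ w) :
    w <+: listPow q w.length := by
  have hpow : ∀ n, w <+: listPow q n ++ w := by
    intro n
    induction n with
    | zero => simp [listPow]
    | succ n ih =>
      rw [listPow_succ, append_assoc]
      exact h.trans ((prefix_append_right_inj q).2 ih)
  refine prefix_of_prefix_length_le (hpow w.length) (prefix_append _ _) ?_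
  rw [length_listPow]
  exact Nat.le_mul_of_pos_right _ (length_pos_iff.2 hq)

section Lyndon

variable [LinearOrder α]

theorem isLyndon_singleton (a : α) : IsLyndon [a] :=
  ⟨cons_ne_nil a [], fun r hr0 hr => by simp only [length_singleton] at hr; omega⟩

theorem IsLyndon.lt_drop {w : List α} (hw : IsLyndon w) {r : ℕ} (hr0 : 0 < r)
    (hr : r < w.length) : w < w.drop r := by
  have hrot : w < w.drop r ++ w.take r := hw.2 r hr0 hr
  by_contra hge
  rw [not_lt] at hge
  by_cases hp : w.drop r <+: w
  · -- `w = B ++ X = Y ++ B` with `|X| = |Y| = r`: the rotation by `r` forces `X < Y`,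
    -- the rotation by `|w| - r` forces `Y ≤ X`.
    have hB : w.drop r = w.take (w.length - r) := by simpa using prefix_iff_eq_take.1 hp
    have hsplit : w = w.drop r ++ w.drop (w.length - r) := by rw [hB, take_append_drop]
    have hXY : w.drop (w.length - r) < w.take r :=
      lt_of_append_lt_append_left (by rwa [← hsplit])
    have hrot' : w < w.drop (w.length - r) ++ w.drop r := by
      rw [hB]
      exact hw.2 (w.length - r) (by omega) (by omega)
    have hYX := append_lt_append_of_lt_of_length_le hXY
      (by simp only [length_take, length_drop]; omega) (w.drop r) (w.drop r)
    rw [take_append_drop] at hYX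
    exact lt_asymm hrot' hYX
  · have hlt : w.drop r < w := lt_of_le_of_ne hge fun h => by
      have := congrArg length h
      simp only [length_drop] at this
      omega
    have := append_lt_append_of_lt_of_not_prefix hlt hp (w.take r) []
    rw [append_nil] at this
    exact lt_asymm hrot this

theorem isLyndon_of_lt_drop {w : List α} (hne : w ≠ [])
    (h : ∀ r, 0 < r → r < w.length → w < w.drop r) : IsLyndon w :=
  ⟨hne, fun r hr0 hr => by
    simpa [rot] using append_lt_append_of_lt_of_length_le (h r hr0 hr) (by simp) [] (w.take r)⟩

theorem IsLyndon.head_le {q : List α} (hq : IsLyndon q) {a : α} (ha : a ∈ q) :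
    q.head hq.1 ≤ a := by
  obtain ⟨t, ht, rfl⟩ := getElem_of_mem ha
  rcases Nat.eq_zero_or_pos t with rfl | ht0
  · rw [head_eq_getElem]
  · have h : q.head hq.1 :: q.tail < q[t] :: q.drop (t + 1) := by
      rw [cons_head_tail, ← drop_eq_getElem_cons]
      exact hq.lt_drop ht0 ht
    exact le_of_cons_lt_cons h

theorem isLyndon_listPow_append {q : List α} (hq : IsLyndon q) {d : α} (hd : q.head hq.1 < d)
    (n : ℕ) : IsLyndon (listPow q n ++ [d]) := by
  induction n with
  | zero => simpa [listPow] using isLyndon_singleton d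
  | succ n ih =>
    set S := listPow q n ++ [d]
    have hqS : q ++ S < S := by
      have hq' : q ++ [d] < [d] := by
        rw [← cons_head_tail hq.1]
        exact Lex.rel hd
      have e : q ++ S = listPow q n ++ (q ++ [d]) := by
        rw [← append_assoc, ← listPow_succ, listPow_succ', append_assoc]
      rw [e]
      exact append_left_lt hq'
    rw [listPow_succ, append_assoc]
    refine isLyndon_of_lt_drop (by simp) fun r hr0 hr => ?_
    rcases lt_or_ge r q.length with hrq | hrq
    · rw [drop_append_of_le_length hrq.le]
      exact append_lt_append_of_lt_of_length_le (hq.lt_drop hr0 hrq) (by simp) S S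
    · rw [drop_append, drop_eq_nil_of_le hrq, nil_append]
      refine hqS.trans_le ?_
      rcases Nat.eq_zero_or_pos (r - q.length) with hzero | hpos
      · rw [hzero, drop_zero]
      · refine (ih.lt_drop hpos ?_).le
        simp only [S, length_append, length_singleton] at hr ⊢
        omega

theorem inP'_of_prefix_append {w q : List α} (hq : IsLyndon q) (hw : w ≠ []) (h : w <+: q ++ w) :
    InP' w := by
  have hpow := prefix_listPow_of_prefix_append hq.1 h
  by_cases hd : ∃ d, q.head hq.1 < d
  · obtain ⟨d, hd⟩ := hd
    obtain ⟨u, hu⟩ := hpow.trans (prefix_append _ [d])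
    exact Or.inl ⟨hw, u, by rw [hu]; exact isLyndon_listPow_append hq hd _⟩
  · simp only [not_exists, not_lt] at hd
    have hrep : w = replicate w.length (q.head hq.1) := by
      refine eq_replicate_iff.2 ⟨rfl, fun a ha => le_antisymm (hd a) (hq.head_le ?_)⟩
      have := hpow.subset ha
      simp only [listPow, mem_flatten, mem_replicate] at this
      obtain ⟨_, ⟨_, rfl⟩, ha⟩ := this
      exact ha
    rcases Nat.lt_or_ge w.length 2 with h1 | h2
    · have hlen : w.length = 1 := by have := length_pos_iff.2 hw; omega
      obtain ⟨a, rfl⟩ := length_eq_one_iff.1 hlen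
      exact Or.inl ⟨hw, [], isLyndon_singleton a⟩
    · exact Or.inr ⟨_, _, h2, hd, hrep⟩

def PrefixLeSuffix (w : List α) : Prop :=
  ∀ r, 0 < r → r < w.length → w.take (w.length - r) ≤ w.drop r

theorem prefixLeSuffix_of_inP' {w : List α} (h : InP' w) : PrefixLeSuffix w := by
  rcases h with ⟨_, u, hL⟩ | ⟨a, n, -, -, rfl⟩
  · intro r hr0 hr
    by_contra hlt
    rw [not_le] at hlt
    have h1 := append_lt_append_of_lt_of_length_le hlt (by simp) u (w.drop (w.length - r) ++ u)
    rw [← append_assoc, take_append_drop] at h1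
    have h2 := hL.lt_drop hr0 (by simp only [length_append]; omega)
    rw [drop_append_of_le_length hr.le] at h2
    exact lt_asymm h1 h2
  · intro r _ _
    simp [take_replicate, drop_replicate]

theorem PrefixLeSuffix.exists_mismatch {w : List α} (hw : PrefixLeSuffix w) {r : ℕ}
    (hr0 : 0 < r) (hr : r < w.length) (hnb : ¬ w.drop r <+: w) :
    ∃ e, ∃ h : r + e < w.length, (∀ t (ht : t < e), w[t] = w[r + t]) ∧ w[e] < w[r + e] := by
  have hlt : w.take (w.length - r) < w.drop r :=
    lt_of_le_of_ne (hw r hr0 hr) fun h => hnb (h ▸ take_prefix _ _)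
  rcases List.lt_iff_exists.1 hlt with ⟨_, hlen⟩ | ⟨e, h1, h2, heq, hlt⟩
  · simp at hlen
  · simp only [length_take, length_drop, getElem_take, getElem_drop] at h1 h2 heq hlt
    exact ⟨e, by omega, fun t ht => heq t ht, hlt⟩

theorem PrefixLeSuffix.isLyndon_take {w b : List α} (hw : PrefixLeSuffix w)
    (hb : IsLongestBorder b w) : IsLyndon (w.take (w.length - b.length)) := by
  obtain ⟨⟨hpre, hsuf, hblt⟩, hmax⟩ := hb
  generalize hp : w.length - b.length = p
  have hbp : b = w.drop p := by rw [← hp]; exact suffix_iff_eq_drop.1 hsuf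
  have hper : ∀ t (h : p + t < w.length), w[p + t] = w[t] := by
    intro t h
    rw [← hpre.getElem (i := t) (by omega)]
    simp only [hbp, getElem_drop]
  have hmis : ∀ r, 0 < r → r < p → ∃ e, ∃ h : r + e < w.length,
      (∀ t (ht : t < e), w[t] = w[r + t]) ∧ w[e] < w[r + e] := by
    refine fun r hr0 hrp => hw.exists_mismatch hr0 (by omega) fun h => ?_
    have := hmax _ ⟨h, drop_suffix _ _, by simp only [length_drop]; omega⟩
    simp only [length_drop] at this
    omega
  refine isLyndon_of_lt_drop (ne_nil_of_length_pos (by simp only [length_take]; omega))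
    fun r hr0 hr => ?_
  simp only [length_take] at hr
  obtain ⟨e, he, heq, hlt⟩ := hmis r hr0 (by omega)
  by_cases hep : e < p - r
  · exact List.lt_iff_exists.2 (Or.inr ⟨e, by simp only [length_take]; omega,
      by simp only [length_take, length_drop]; omega, fun t ht => by simpa using heq t ht,
      by simpa using hlt⟩)
  · -- through the period `p`, the mismatch at shift `r` becomes one in the wrong direction
    -- at shift `p - r`
    refine absurd (hw (p - r) (by omega) (by omega)) (not_le.2 ?_)
    refine List.lt_iff_exists.2
      (Or.inr ⟨e - (p - r), by simp only [length_drop]; omega, by simp only [length_take]; omega,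
        fun t ht => ?_, ?_⟩)
    · simp only [getElem_drop, getElem_take]
      calc w[p - r + t] = w[r + (p - r + t)] := heq _ (by omega)
        _ = w[p + t] := getElem_congr_idx (by omega)
        _ = w[t] := hper t (by omega)
    · simp only [getElem_drop, getElem_take]
      calc w[p - r + (e - (p - r))] = w[e] := getElem_congr_idx (by omega)
        _ < w[r + e] := hlt
        _ = w[p + (e - (p - r))] := getElem_congr_idx (by omega)
        _ = w[e - (p - r)] := hper _ (by omega)

theorem inP'_append_of_isLongestBorder {w b z : List α} (hw : InP' w)
    (hb : IsLongestBorder b w) (hpre : b ++ z <+: w ++ z) : InP' (w ++ z) := by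
  have hsplit : w.take (w.length - b.length) ++ b = w := by
    conv_rhs => rw [← take_append_drop (w.length - b.length) w]
    rw [← suffix_iff_eq_drop.1 hb.1.2.1]
  refine inP'_of_prefix_append ((prefixLeSuffix_of_inP' hw).isLyndon_take hb)
    (ne_nil_of_length_pos (by have := hb.1.2.2; simp only [length_append]; omega)) ?_
  have := (prefix_append_right_inj (w.take (w.length - b.length))).2 hpre
  rwa [← append_assoc, hsplit] at this

end Lyndon

def IsRunSeq (c : ℕ → α) (l : ℕ → ℕ) (k j : ℕ) : Prop :=
  (∀ t, k ≤ t → t < j → 0 < l t) ∧ ∀ t, k ≤ t → t + 1 < j → c t ≠ c (t + 1)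

section Runs

variable {c : ℕ → α} {l : ℕ → ℕ}

theorem IsRunSeq.mono {k j j' : ℕ} (h : IsRunSeq c l k j) (hj : j' ≤ j) : IsRunSeq c l k j' :=
  ⟨fun t h1 h2 => h.1 t h1 (by omega), fun t h1 h2 => h.2 t h1 (by omega)⟩

variable (c l) in
theorem runWord_of_le {k j : ℕ} (h : j ≤ k) : runWord c l k j = [] := by
  simp [runWord, Nat.sub_eq_zero_of_le h]

variable (c l) in
theorem runWord_succ {k j : ℕ} (h : k ≤ j) :
    runWord c l k (j + 1) = runWord c l k j ++ replicate (l j) (c j) := by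
  simp [runWord, Nat.sub_add_comm h, range_succ, Nat.add_sub_cancel' h]

variable (c l) in
theorem runWord_prefix {k m j : ℕ} (hkm : k ≤ m) (hmj : m ≤ j) :
    runWord c l k m <+: runWord c l k j := by
  induction j, hmj using Nat.le_induction with
  | base => exact prefix_refl _
  | succ j hmj ih =>
    rw [runWord_succ c l (hkm.trans hmj)]
    exact ih.trans (prefix_append _ _)

theorem runWord_append_replicate_prefix {k i j m : ℕ} (hki : k ≤ i) (hij : i < j)
    (hm : m ≤ l i) : runWord c l k i ++ replicate m (c i) <+: runWord c l k j := by
  refine .trans ?_ (runWord_prefix c l (by omega) hij)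
  rw [runWord_succ c l hki]
  exact (prefix_append_right_inj _).2 (prefix_replicate_iff.2 ⟨by simpa using hm, by simp⟩)

theorem IsBorder.lt_of_runWord {k i j : ℕ} (hb : IsBorder (runWord c l k i) (runWord c l k j))
    (hkj : k ≤ j) : i < j := by
  by_contra hij
  exact absurd hb.2.2 (not_lt.2 (runWord_prefix c l hkj (not_lt.1 hij)).length_le)

theorem length_runWord_succ {k j : ℕ} (h : k ≤ j) :
    (runWord c l k (j + 1)).length = (runWord c l k j).length + l j := by
  simp [runWord_succ c l h]

theorem getLast?_runWord {k j : ℕ} (hkj : k < j) (hl : 0 < l (j - 1)) :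
    (runWord c l k j).getLast? = some (c (j - 1)) := by
  obtain ⟨j, rfl⟩ : ∃ j', j = j' + 1 := ⟨j - 1, by omega⟩
  rw [Nat.add_sub_cancel] at hl ⊢
  rw [runWord_succ c l (by omega)]
  simp [getLast?_replicate, hl.ne']

theorem replicate_suffix_runWord {k j m : ℕ} (hkj : k < j) (hm : m ≤ l (j - 1)) :
    replicate m (c (j - 1)) <:+ runWord c l k j := by
  obtain ⟨j, rfl⟩ : ∃ j', j = j' + 1 := ⟨j - 1, by omega⟩
  rw [Nat.add_sub_cancel] at hm ⊢
  rw [runWord_succ c l (by omega)]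
  exact suffix_append_of_suffix (suffix_replicate_iff.2 ⟨by simpa using hm, by simp⟩)

theorem exists_eq_runWord_append_replicate_of_prefix {k j : ℕ} {x : List α}
    (hx : x <+: runWord c l k j) (hne : x ≠ []) :
    ∃ e m, k ≤ e ∧ e < j ∧ 0 < m ∧ m ≤ l e ∧
      x = runWord c l k e ++ replicate m (c e) := by
  induction j with
  | zero => simp_all [runWord_of_le]
  | succ j ih =>
    rcases Nat.lt_or_ge j k with hjk | hkj
    · simp_all [runWord_of_le c l (show j + 1 ≤ k by omega)]
    rw [runWord_succ c l hkj] at hx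
    rcases le_or_gt x.length (runWord c l k j).length with hle | hlt
    · obtain ⟨e, m, h⟩ := ih (prefix_of_prefix_length_le hx (prefix_append _ _) hle)
      exact ⟨e, m, h.1, by omega, h.2.2⟩
    · obtain ⟨x', rfl⟩ := prefix_of_prefix_length_le (prefix_append _ _) hx hlt.le
      obtain ⟨hx'l, hx'⟩ := prefix_replicate_iff.1 ((prefix_append_right_inj _).1 hx)
      exact ⟨j, x'.length, hkj, by omega, by simpa using hlt, hx'l, by rw [← hx']⟩

end Runs

section NumRuns

variable [DecidableEq α]

theorem numRuns_cons (a : α) (w : List α) :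
    numRuns (a :: w) = numRuns w + if w.head? = some a then 0 else 1 := by
  cases w with
  | nil => rfl
  | cons b w =>
    by_cases h : a = b
    · subst h
      simp [numRuns, destutter_cons']
    · simp [numRuns, destutter_cons', h, Ne.symm h]

theorem numRuns_append {x y : List α} (h : ∀ a ∈ x.getLast?, ∀ b ∈ y.head?, a ≠ b) :
    numRuns (x ++ y) = numRuns x + numRuns y := by
  induction x with
  | nil => simp [numRuns]
  | cons a x ih =>
    rw [cons_append, numRuns_cons, numRuns_cons]
    rcases eq_or_ne x [] with rfl | hx
    · cases y with
      | nil => rfl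
      | cons b y =>
        have hab : a ≠ b := h a rfl b rfl
        simp [numRuns, hab.symm, Nat.add_comm]
    · rw [ih (by simpa [getLast?_cons, getLast?_eq_some_getLast hx] using h),
        head?_append_of_ne_nil _ hx]
      omega

theorem numRuns_replicate (a : α) {m : ℕ} (hm : 0 < m) : numRuns (replicate m a) = 1 := by
  induction m with
  | zero => omega
  | succ m ih =>
    rcases Nat.eq_zero_or_pos m with rfl | hm
    · rfl
    · rw [replicate_succ, numRuns_cons, ih hm, head?_replicate, if_neg hm.ne', if_pos rfl]

theorem numRuns_runWord_append_replicate {c : ℕ → α} {l : ℕ → ℕ} {k j m : ℕ}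
    (h : IsRunSeq c l k (j + 1)) (hkj : k ≤ j) (hm : 0 < m) :
    numRuns (runWord c l k j ++ replicate m (c j)) = j - k + 1 := by
  induction j, hkj using Nat.le_induction generalizing m with
  | base => simp [runWord_of_le, numRuns_replicate _ hm]
  | succ j hkj ih =>
    have hlj := h.1 j hkj (by omega)
    rw [runWord_succ c l hkj, numRuns_append, ih (h.mono (by omega)) hlj, numRuns_replicate _ hm]
    · omega
    · simpa [getLast?_replicate, head?_replicate, hlj.ne', hm.ne'] using h.2 j hkj (by omega)

end NumRuns

section LongestBorder

variable {c : ℕ → α} {l : ℕ → ℕ}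

theorem not_isLongestBorder_runWord_append_replicate {k j e m : ℕ} (hruns : IsRunSeq c l k j)
    (hkj : k + 2 ≤ j) (hke : k ≤ e) (hej : e < j) (hm0 : 0 < m) (hm : m < l e)
    (hlast : l e ≤ l (j - 1)) :
    ¬ IsLongestBorder (runWord c l k e ++ replicate m (c e)) (runWord c l k j) := by
  intro hb
  have hsuf : replicate (m + 1) (c (j - 1)) <:+ runWord c l k j :=
    replicate_suffix_runWord (by omega) (by omega)
  rcases hke.eq_or_lt with rfl | hke
  · rw [runWord_of_le c l le_rfl, nil_append] at hb
    have hck : c k = c (j - 1) := by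
      refine eq_of_mem_replicate ((suffix_of_suffix_length_le hb.1.2.1 hsuf ?_).subset ?_)
      · simp
      · simp [hm0.ne']
    have hborder : IsBorder (replicate (m + 1) (c k)) (runWord c l k j) := by
      refine ⟨?_, hck ▸ hsuf, ?_⟩
      · have h1 : replicate (m + 1) (c k) <+: replicate (l k) (c k) :=
          prefix_replicate_iff.2 ⟨by simp only [length_replicate]; omega, by simp⟩
        refine h1.trans ?_
        simpa [runWord_succ c l le_rfl, runWord_of_le c l le_rfl] using
          runWord_prefix c l (Nat.le_succ k) (show k + 1 ≤ j by omega)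
      · have h1 := (runWord_prefix c l (Nat.le_add_right k 2) hkj).length_le
        rw [length_runWord_succ (by omega), length_runWord_succ le_rfl,
          runWord_of_le c l le_rfl] at h1
        have := hruns.1 (k + 1) (by omega) (by omega)
        simp only [length_nil, zero_add, length_replicate] at h1 ⊢
        omega
    have := hb.2 _ hborder
    simp at this
  · have hget := getLast?_runWord (c := c) (l := l) hke (hruns.1 (e - 1) (by omega) (by omega))
    have hne : runWord c l k e ≠ [] := by
      rintro h
      simp [h] at hget
    have hsufb := suffix_of_suffix_length_le hsuf hb.1.2.1 (by
      have := length_pos_iff.2 hne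
      simp only [length_append, length_replicate]
      omega)
    rw [getLast?_eq_some_getLast hne,
      getLast_eq_of_replicate_suffix_append_replicate hm0 hsufb hne, Option.some.injEq] at hget
    exact hruns.2 (e - 1) (by omega) (by omega)
      (by rw [Nat.sub_add_cancel (by omega : 1 ≤ e), hget])

theorem IsLongestBorder.eq_runWord [DecidableEq α] {k j : ℕ} {b : List α}
    (hruns : IsRunSeq c l k j) (hkj : k + 2 ≤ j) (hb : IsLongestBorder b (runWord c l k j))
    (hlast : numRuns b = 0 ∨ l (k + numRuns b - 1) ≤ l (j - 1)) :
    b = runWord c l k (k + numRuns b) := by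
  rcases eq_or_ne b [] with rfl | hne
  · simp [numRuns, runWord_of_le]
  obtain ⟨e, m, hke, hej, hm0, hml, rfl⟩ :=
    exists_eq_runWord_append_replicate_of_prefix hb.1.1 hne
  rw [numRuns_runWord_append_replicate (hruns.mono hej) hke hm0] at hlast ⊢
  rw [show k + (e - k + 1) = e + 1 by omega, runWord_succ c l hke]
  rcases hml.lt_or_eq with hlt | rfl
  · refine absurd hb (not_isLongestBorder_runWord_append_replicate hruns hkj hke hej hm0 hlt ?_)
    rcases hlast with h | h
    · omega
    · rwa [show k + (e - k + 1) - 1 = e by omega] at h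
  · rfl

end LongestBorder

theorem rle_next_case3_general [LinearOrder α] (c : ℕ → α) (l : ℕ → ℕ) (k j : ℕ) (hkj : k < j)
    (hlpos : ∀ t, k ≤ t → t ≤ j → 1 ≤ l t)
    (hcne : ∀ t, k ≤ t → t < j → c t ≠ c (t + 1))
    (hP' : InP' (runWord c l k j))
    (b : List α) (hb : IsBorder b (runWord c l k j))
    (hbmax : ∀ b' : List α, IsBorder b' (runWord c l k j) → b'.length ≤ b.length)
    (ℓ i z : ℕ)
    (hℓ : ℓ = if 1 < j - k then numRuns b else 0)
    (hi : i = k + ℓ)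
    (hz : z = if 0 < ℓ ∧ l (j - 1) < l (i - 1) then 1 else 0)
    (hz0 : z = 0) (hceq : c j = c i) (hle : l j ≤ l i) :
    InP' (runWord c l k (j + 1)) ∧
      ∃ b' : List α, IsBorder b' (runWord c l k (j + 1)) ∧
        (∀ b'' : List α, IsBorder b'' (runWord c l k (j + 1)) → b''.length ≤ b'.length) ∧
        numRuns b' = ℓ + 1 := by
  have hruns : IsRunSeq c l k (j + 1) :=
    ⟨fun t h1 h2 => hlpos t h1 (by omega), fun t h1 h2 => hcne t h1 (by omega)⟩
  have hb' : IsLongestBorder b (runWord c l k j) := ⟨hb, hbmax⟩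
  have hj : k + 2 ≤ j := by
    by_contra hj
    rw [if_neg (by omega)] at hℓ
    exact hcne k le_rfl hkj (by rw [show k + 1 = j by omega, hceq, hi, hℓ, Nat.add_zero])
  rw [if_pos (by omega)] at hℓ
  subst hℓ
  have hbi : b = runWord c l k i := by
    rw [hz0, hi] at hz
    split_ifs at hz with hlast
    rw [hi]
    exact hb'.eq_runWord (hruns.mono (Nat.le_succ j)) hj (by omega)
  have hij : i < j := (hbi ▸ hb).lt_of_runWord hkj.le
  have hpre : b ++ replicate (l j) (c j) <+: runWord c l k j ++ replicate (l j) (c j) := by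
    rw [hbi, hceq]
    exact prefix_append_of_prefix (runWord_append_replicate_prefix (by omega) hij hle)
  have hb'' := hb'.append hpre
  rw [runWord_succ c l hkj.le]
  refine ⟨inP'_append_of_isLongestBorder hP' hb' hpre, _, hb''.1, hb''.2, ?_⟩
  rw [show numRuns b = i - k by omega, hbi, hceq,
    numRuns_runWord_append_replicate (hruns.mono (by omega)) (by omega) (hlpos j (by omega) le_rfl)]

/-- Under the run invariant, if `z = 0`, `c_j = c_i` and `l_j ≤ l_i`, then
`c_k^{l_k} ⋯ c_{j-1}^{l_{j-1}} c_j^{l_j} ∈ P'` and its longest border has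
run-length encoding of length `ℓ + 1`. -/
theorem rle_next_case3 [LinearOrder α] (c : ℕ → α) (l : ℕ → ℕ) (k j : ℕ) (hkj : k < j)
    (hlpos : ∀ t, k ≤ t → t ≤ j → 1 ≤ l t)
    (hcne : ∀ t, k ≤ t → t < j → c t ≠ c (t + 1))
    (hP' : InP' (runWord c l k j))
    (b : List α) (hb : IsBorder b (runWord c l k j))
    (hbmax : ∀ b' : List α, IsBorder b' (runWord c l k j) → b'.length ≤ b.length)
    (ℓ i z s : ℕ)
    (hℓ : ℓ = if 1 < j - k then numRuns b else 0)
    (hi : i = k + ℓ)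
    (hz : z = if 0 < ℓ ∧ l (j - 1) < l (i - 1) then 1 else 0)
    (hs : s = i - z)
    (hz0 : z = 0) (hceq : c j = c i) (hle : l j ≤ l i) :
    InP' (runWord c l k (j + 1)) ∧
      ∃ b' : List α, IsBorder b' (runWord c l k (j + 1)) ∧
        (∀ b'' : List α, IsBorder b'' (runWord c l k (j + 1)) → b''.length ≤ b'.length) ∧
        numRuns b' = ℓ + 1 :=
  rle_next_case3_general c l k j hkj hlpos hcne hP' b hb hbmax ℓ i z hℓ hi hz hz0 hceq hle
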